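/- Let λ > 0, let μ ∈ (0, 2/(2λ + L_f)], and let x̄₀, η ∈ ℝⁿ. Then the mapping x ↦ Prox_{μg}((1 − μλ)x − μ∇f(x) + μλx̄₀ + μη) from ℝⁿ to ℝⁿ is Lipschitz continuous with constant 1 − μλ, and 1 − μλ < 1, so it is a contraction. Moreover, over μ ∈ (0, 2/(2λ + L_f)] the contraction coefficient 1 − μλ attains its minimum value L_f/(2λ + L_f) exactly at μ = 2/(2λ + L_f). -/

import Mathlib

open Set Filter Topology
open scoped InnerProductSpace

noncomputable section

abbrev Euc (n : ℕ) := EuclideanSpace ℝ (Fin n)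

/-- Convexity for extended-real-valued functions. -/
def ConvexEReal {n : ℕ} (g : Euc n → EReal) : Prop :=
  ∀ x y : Euc n, ∀ a b : ℝ, 0 ≤ a → 0 ≤ b → a + b = 1 →
    g (a • x + b • y) ≤ (a : EReal) * g x + (b : EReal) * g y

/-- `g` is proper: nowhere `⊥` and somewhere finite. -/
def ProperE {n : ℕ} (g : Euc n → EReal) : Prop :=
  (∀ x, g x ≠ ⊥) ∧ ∃ x, g x ≠ ⊤

/-- `P` is the proximal mapping of `g`: for every `α > 0` and every `x`, `P α x` is
the unique minimizer over `ℝⁿ` of `y ↦ g y + (1/(2α)) ‖x - y‖²`. -/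
def IsProx {n : ℕ} (g : Euc n → EReal) (P : ℝ → Euc n → Euc n) : Prop :=
  ∀ α : ℝ, 0 < α → ∀ x p, P α x = p ↔
    (∀ y, g p + ((1/(2*α) * ‖x - p‖^2 : ℝ) : EReal) ≤ g y + ((1/(2*α) * ‖x - y‖^2 : ℝ) : EReal))

/-!
The proximal map of a proper convex function is firmly nonexpansive,
`‖P x - P y‖² ≤ ⟪x - y, P x - P y⟫`, hence `1`-Lipschitz, so it suffices that the forward step
`z ↦ (1 - μλ) z - μ ∇f z` is `(1 - μλ)`-Lipschitz. By the Baillon–Haddad theorem, `∇f` is `1/L_f`-cocoercive, and expanding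
`‖a u - μ d‖²` shows that `z ↦ a z - μ ∇f z` is `a`-Lipschitz as soon as `μ L_f ≤ 2a`; with
`a = 1 - μλ` this is exactly `μ ≤ 2/(2λ + L_f)`. The claims about the coefficient hold because
`1 - μλ` decreases in `μ` and equals `L_f/(2λ + L_f)` at `μ = 2/(2λ + L_f)`.
-/

section Smooth

variable {E : Type*} [NormedAddCommGroup E] [InnerProductSpace ℝ E] {L : ℝ}

theorem norm_smul_sub_smul_sub_le_of_cocoercive {F : E → E}
    (hF : ∀ z w, ‖F z - F w‖ ^ 2 / L ≤ ⟪F z - F w, z - w⟫_ℝ) (hL₀ : 0 < L)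
    {a μ : ℝ} (ha : 0 ≤ a) (hμ : 0 ≤ μ) (hμL : μ * L ≤ 2 * a) (z w : E) :
    ‖(a • z - μ • F z) - (a • w - μ • F w)‖ ≤ a * ‖z - w‖ := by
  set u := z - w
  set d := F z - F w
  have hexpand : ‖(a • z - μ • F z) - (a • w - μ • F w)‖ ^ 2
      = a ^ 2 * ‖u‖ ^ 2 - 2 * (a * μ) * ⟪d, u⟫_ℝ + μ ^ 2 * ‖d‖ ^ 2 := by
    rw [show (a • z - μ • F z) - (a • w - μ • F w) = a • u - μ • d by simp only [u, d]; module,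
      norm_sub_sq_real, real_inner_smul_left, real_inner_smul_right, real_inner_comm,
      norm_smul, norm_smul, Real.norm_of_nonneg ha, Real.norm_of_nonneg hμ]
    ring
  have hstep : μ ^ 2 * ‖d‖ ^ 2 ≤ 2 * (a * μ) * (‖d‖ ^ 2 / L) :=
    calc μ ^ 2 * ‖d‖ ^ 2 = μ * (μ * L) * (‖d‖ ^ 2 / L) := by field_simp
      _ ≤ μ * (2 * a) * (‖d‖ ^ 2 / L) := by gcongr
      _ = 2 * (a * μ) * (‖d‖ ^ 2 / L) := by ring
  have hco : 2 * (a * μ) * (‖d‖ ^ 2 / L) ≤ 2 * (a * μ) * ⟪d, u⟫_ℝ := by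
    gcongr
    exact hF z w
  refine (pow_le_pow_iff_left₀ (norm_nonneg _) (by positivity) two_ne_zero).mp ?_
  rw [hexpand, mul_pow]
  linarith

variable [CompleteSpace E] {f : E → ℝ} {f' : E → E}

theorem HasGradientAt.hasDerivAt_comp_lineMap {g x y : E} {t : ℝ}
    (hf : HasGradientAt f g (AffineMap.lineMap x y t)) :
    HasDerivAt (f ∘ AffineMap.lineMap x y) ⟪g, y - x⟫_ℝ t :=
  (hasGradientAt_iff_hasFDerivAt.mp hf).comp_hasDerivAt t AffineMap.hasDerivAt_lineMap

theorem ConvexOn.add_inner_sub_le_of_hasGradientAt {g x : E} (hf : ConvexOn ℝ univ f)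
    (hx : HasGradientAt f g x) (y : E) :
    f x + ⟪g, y - x⟫_ℝ ≤ f y := by
  have hconv : ConvexOn ℝ univ (f ∘ AffineMap.lineMap (k := ℝ) x y) := hf.comp_affineMap _
  have hderiv : HasDerivAt (f ∘ AffineMap.lineMap x y) ⟪g, y - x⟫_ℝ (0 : ℝ) :=
    HasGradientAt.hasDerivAt_comp_lineMap (by rwa [AffineMap.lineMap_apply_zero (p₁ := y)])
  have := hconv.le_slope_of_hasDerivAt (mem_univ (0 : ℝ)) (mem_univ 1) one_pos hderiv
  simp only [slope_def_field, Function.comp_apply, AffineMap.lineMap_apply_one,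
    AffineMap.lineMap_apply_zero, sub_zero, div_one] at this
  linarith

theorem le_add_inner_add_sq_of_lipschitz_gradient (hf : ∀ z, HasGradientAt f (f' z) z)
    (hL : ∀ z w, ‖f' z - f' w‖ ≤ L * ‖z - w‖) (x y : E) :
    f y ≤ f x + ⟪f' x, y - x⟫_ℝ + L / 2 * ‖y - x‖ ^ 2 := by
  set ψ : ℝ → ℝ := fun t ↦
    f (AffineMap.lineMap x y t) - t * ⟪f' x, y - x⟫_ℝ - L / 2 * t ^ 2 * ‖y - x‖ ^ 2
  have hψ : ∀ t, HasDerivAt ψ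
      (⟪f' (AffineMap.lineMap x y t) - f' x, y - x⟫_ℝ - L * t * ‖y - x‖ ^ 2) t := by
    intro t
    refine ((((hf _).hasDerivAt_comp_lineMap (x := x) (y := y)).sub ((hasDerivAt_id t).mul_const
      ⟪f' x, y - x⟫_ℝ)).sub (((hasDerivAt_pow 2 t).const_mul (L / 2)).mul_const
      (‖y - x‖ ^ 2))).congr_deriv ?_
    rw [inner_sub_left]
    push_cast
    ring
  have hψ'_nonpos : ∀ t ∈ interior (Icc (0 : ℝ) 1),
      ⟪f' (AffineMap.lineMap x y t) - f' x, y - x⟫_ℝ - L * t * ‖y - x‖ ^ 2 ≤ 0 := by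
    intro t ht
    rw [interior_Icc] at ht
    refine sub_nonpos.mpr ?_
    have hdist : ‖AffineMap.lineMap x y t - x‖ = t * ‖y - x‖ := by
      rw [AffineMap.lineMap_apply_module', add_sub_cancel_right, norm_smul,
        Real.norm_of_nonneg ht.1.le]
    calc ⟪f' (AffineMap.lineMap x y t) - f' x, y - x⟫_ℝ
        ≤ ‖f' (AffineMap.lineMap x y t) - f' x‖ * ‖y - x‖ := real_inner_le_norm _ _
      _ ≤ L * ‖AffineMap.lineMap x y t - x‖ * ‖y - x‖ := by gcongr; exact hL _ _
      _ = L * t * ‖y - x‖ ^ 2 := by rw [hdist]; ring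
  have hanti : AntitoneOn ψ (Icc 0 1) :=
    antitoneOn_of_hasDerivWithinAt_nonpos (convex_Icc 0 1)
      (fun t _ ↦ (hψ t).continuousAt.continuousWithinAt)
      (fun t _ ↦ (hψ t).hasDerivWithinAt) hψ'_nonpos
  have := hanti (left_mem_Icc.mpr zero_le_one) (right_mem_Icc.mpr zero_le_one) zero_le_one
  simp only [ψ, AffineMap.lineMap_apply_one, AffineMap.lineMap_apply_zero, one_mul, one_pow,
    mul_one, zero_mul, zero_pow two_ne_zero, mul_zero, sub_zero] at this
  linarith

theorem ConvexOn.add_inner_add_sq_norm_le_of_lipschitz_gradient (hconv : ConvexOn ℝ univ f)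
    (hf : ∀ z, HasGradientAt f (f' z) z) (hL : ∀ z w, ‖f' z - f' w‖ ≤ L * ‖z - w‖)
    (hL₀ : 0 < L) (x y : E) :
    f x + ⟪f' x, y - x⟫_ℝ + ‖f' y - f' x‖ ^ 2 / (2 * L) ≤ f y := by
  set d := f' y - f' x
  -- a gradient step from `y` for `f - ⟪f' x, ·⟫`, whose minimum is attained at `x`
  set z := y - L⁻¹ • d
  have hlower := hconv.add_inner_sub_le_of_hasGradientAt (hf x) z
  have hupper := le_add_inner_add_sq_of_lipschitz_gradient hf hL y z
  have hzy : z - y = -L⁻¹ • d := by simp only [z]; module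
  have hzx : z - x = (z - y) + (y - x) := by abel
  have hinner : ⟪f' y, z - y⟫_ℝ - ⟪f' x, z - y⟫_ℝ = -L⁻¹ * ‖d‖ ^ 2 := by
    rw [← inner_sub_left, hzy, real_inner_smul_right, real_inner_self_eq_norm_sq]
  have hnorm : ‖z - y‖ ^ 2 = L⁻¹ ^ 2 * ‖d‖ ^ 2 := by
    rw [hzy, norm_smul, mul_pow, norm_neg, Real.norm_of_nonneg (inv_nonneg.mpr hL₀.le)]
  rw [hzx, inner_add_right] at hlower
  rw [hnorm] at hupper
  have : ‖d‖ ^ 2 / (2 * L) = L⁻¹ * ‖d‖ ^ 2 - L / 2 * (L⁻¹ ^ 2 * ‖d‖ ^ 2) := by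
    field_simp; ring
  linarith

theorem ConvexOn.cocoercive_of_lipschitz_gradient (hconv : ConvexOn ℝ univ f)
    (hf : ∀ z, HasGradientAt f (f' z) z) (hL : ∀ z w, ‖f' z - f' w‖ ≤ L * ‖z - w‖)
    (hL₀ : 0 < L) (x y : E) :
    ‖f' x - f' y‖ ^ 2 / L ≤ ⟪f' x - f' y, x - y⟫_ℝ := by
  have hxy := hconv.add_inner_add_sq_norm_le_of_lipschitz_gradient hf hL hL₀ x y
  have hyx := hconv.add_inner_add_sq_norm_le_of_lipschitz_gradient hf hL hL₀ y x
  have hinner : ⟪f' x - f' y, x - y⟫_ℝ = -⟪f' x, y - x⟫_ℝ - ⟪f' y, x - y⟫_ℝ := by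
    rw [inner_sub_left, ← neg_sub x y, inner_neg_right]; ring
  rw [norm_sub_rev] at hxy
  have : ‖f' x - f' y‖ ^ 2 / L = 2 * (‖f' x - f' y‖ ^ 2 / (2 * L)) := by field_simp
  linarith

end Smooth

namespace IsProx

variable {n : ℕ} {g : Euc n → EReal} {P : ℝ → Euc n → Euc n} {α : ℝ}

theorem exists_apply_eq_coe (hP : IsProx g P) (hg : ProperE g) (hα : 0 < α) (x : Euc n) :
    ∃ r : ℝ, g (P α x) = r := by
  obtain ⟨y, hy⟩ := hg.2
  have hfinite : g (P α x) + ((1 / (2 * α) * ‖x - P α x‖ ^ 2 : ℝ) : EReal) < ⊤ :=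
    ((hP α hα x _).mp rfl y).trans_lt (EReal.add_lt_top hy (EReal.coe_ne_top _))
  have htop : g (P α x) ≠ ⊤ := fun h ↦ by
    rw [h, EReal.top_add_of_ne_bot (EReal.coe_ne_bot _)] at hfinite
    exact lt_irrefl _ hfinite
  exact ⟨(g (P α x)).toReal, (EReal.coe_toReal htop (hg.1 _)).symm⟩

theorem inner_le_add_mul_sq_norm (hP : IsProx g P) (hg : ConvexEReal g) (hα : 0 < α)
    {x q : Euc n} {r s : ℝ} (hr : g (P α x) = r) (hs : g q = s) {t : ℝ} (ht₀ : 0 < t)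
    (ht₁ : t ≤ 1) :
    ⟪x - P α x, q - P α x⟫_ℝ ≤ α * (s - r) + t / 2 * ‖q - P α x‖ ^ 2 := by
  set p := P α x
  set qt := (1 - t) • p + t • q
  have hseg : g qt ≤ (((1 - t) * r + t * s : ℝ) : EReal) := by
    have := hg p q (1 - t) t (by linarith) ht₀.le (by ring)
    rwa [hr, hs, ← EReal.coe_mul, ← EReal.coe_mul, ← EReal.coe_add] at this
  have hmin : (r : EReal) + ((1 / (2 * α) * ‖x - p‖ ^ 2 : ℝ) : EReal)
      ≤ (((1 - t) * r + t * s : ℝ) : EReal) + ((1 / (2 * α) * ‖x - qt‖ ^ 2 : ℝ) : EReal) :=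
    hr ▸ ((hP α hα x p).mp rfl qt).trans (add_le_add_left hseg _)
  rw [← EReal.coe_add, ← EReal.coe_add, EReal.coe_le_coe_iff] at hmin
  have hexpand : ‖x - qt‖ ^ 2 = ‖x - p‖ ^ 2 - 2 * t * ⟪x - p, q - p⟫_ℝ + t ^ 2 * ‖q - p‖ ^ 2 := by
    rw [show x - qt = (x - p) - t • (q - p) by simp only [qt]; module, norm_sub_sq_real,
      real_inner_smul_right, norm_smul, Real.norm_of_nonneg ht₀.le, mul_pow]
    ring
  rw [hexpand] at hmin
  have hscaled : t * (2 * ⟪x - p, q - p⟫_ℝ) ≤ t * (2 * α * (s - r) + t * ‖q - p‖ ^ 2) := by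
    field_simp at hmin
    linarith
  linarith [le_of_mul_le_mul_left hscaled ht₀]

theorem inner_le (hP : IsProx g P) (hg : ConvexEReal g) (hα : 0 < α)
    {x q : Euc n} {r s : ℝ} (hr : g (P α x) = r) (hs : g q = s) :
    ⟪x - P α x, q - P α x⟫_ℝ ≤ α * (s - r) := by
  have hlim : Tendsto (fun t : ℝ ↦ α * (s - r) + t / 2 * ‖q - P α x‖ ^ 2) (𝓝[>] 0)
      (𝓝 (α * (s - r))) := by
    refine (Continuous.tendsto' ?_ 0 _ (by simp)).mono_left nhdsWithin_le_nhds
    fun_prop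
  refine ge_of_tendsto hlim ?_
  filter_upwards [Ioo_mem_nhdsGT one_pos] with t ht
  exact hP.inner_le_add_mul_sq_norm hg hα hr hs ht.1 ht.2.le

theorem sq_norm_sub_le_inner (hP : IsProx g P) (hproper : ProperE g) (hconv : ConvexEReal g)
    (hα : 0 < α) (x y : Euc n) :
    ‖P α x - P α y‖ ^ 2 ≤ ⟪x - y, P α x - P α y⟫_ℝ := by
  obtain ⟨r, hr⟩ := hP.exists_apply_eq_coe hproper hα x
  obtain ⟨s, hs⟩ := hP.exists_apply_eq_coe hproper hα y
  have hx := hP.inner_le hconv hα hr hs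
  have hy := hP.inner_le hconv hα hs hr
  have hsum : ⟪x - P α x, P α y - P α x⟫_ℝ + ⟪y - P α y, P α x - P α y⟫_ℝ
      = ‖P α x - P α y‖ ^ 2 - ⟪x - y, P α x - P α y⟫_ℝ := by
    rw [← neg_sub (P α x) (P α y), inner_neg_right, ← real_inner_self_eq_norm_sq,
      ← inner_sub_left, ← inner_neg_left, ← inner_add_left]
    congr 1
    abel
  linarith

theorem norm_sub_le (hP : IsProx g P) (hproper : ProperE g) (hconv : ConvexEReal g) (hα : 0 < α)
    (x y : Euc n) : ‖P α x - P α y‖ ≤ ‖x - y‖ := by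
  have h := (hP.sq_norm_sub_le_inner hproper hconv hα x y).trans (real_inner_le_norm _ _)
  rw [sq] at h
  rcases (norm_nonneg (P α x - P α y)).eq_or_lt with h0 | h0
  · exact h0 ▸ norm_nonneg _
  · exact le_of_mul_le_mul_right h h0

end IsProx

theorem div_add_eq_one_sub_div_add_mul {lam L : ℝ} (h : 2 * lam + L ≠ 0) :
    L / (2 * lam + L) = 1 - 2 / (2 * lam + L) * lam := by
  field_simp
  ring

theorem stmt1_general {n : ℕ}
    (f : Euc n → ℝ) (f' : Euc n → Euc n) (Lf : ℝ) (hLf : 0 < Lf)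
    (hfconv : ConvexOn ℝ Set.univ f)
    (hfgrad : ∀ z, HasGradientAt f (f' z) z)
    (hflip : ∀ z w, ‖f' z - f' w‖ ≤ Lf * ‖z - w‖)
    (g : Euc n → EReal) (hgproper : ProperE g) (hgconv : ConvexEReal g)
    (P : ℝ → Euc n → Euc n) (hP : IsProx g P)
    (lam mu : ℝ) (hlam : 0 < lam) (hmu : mu ∈ Set.Ioc 0 (2/(2*lam + Lf)))
    (x0 η : Euc n) :
    (∀ z w : Euc n,
        ‖P mu ((1 - mu*lam) • z - mu • f' z + (mu*lam) • x0 + mu • η) -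
          P mu ((1 - mu*lam) • w - mu • f' w + (mu*lam) • x0 + mu • η)‖ ≤
          (1 - mu*lam) * ‖z - w‖) ∧
      (1 - mu*lam < 1) ∧
      (∀ ν : ℝ, ν ∈ Set.Ioc 0 (2/(2*lam + Lf)) → Lf/(2*lam + Lf) ≤ 1 - ν*lam) ∧
      (∀ ν : ℝ, ν ∈ Set.Ioc 0 (2/(2*lam + Lf)) →
        (1 - ν*lam = Lf/(2*lam + Lf) ↔ ν = 2/(2*lam + Lf))) := by
  obtain ⟨hmu₀, hmu₂⟩ := hmu
  have hD : 0 < 2 * lam + Lf := by linarith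
  have hmuL : mu * Lf ≤ 2 * (1 - mu * lam) := by
    have := (le_div_iff₀ hD).mp hmu₂
    linarith
  have hcoeff := div_add_eq_one_sub_div_add_mul hD.ne'
  refine ⟨fun z w ↦ ?_, by linarith [mul_pos hmu₀ hlam], fun ν hν ↦ ?_, fun ν _ ↦ ?_⟩
  · refine (hP.norm_sub_le hgproper hgconv hmu₀ _ _).trans (le_of_eq_of_le ?_
      (norm_smul_sub_smul_sub_le_of_cocoercive
        (hfconv.cocoercive_of_lipschitz_gradient hfgrad hflip hLf) hLf
        (by linarith [mul_pos hmu₀ hLf]) hmu₀.le hmuL z w))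
    congr 1
    abel
  · rw [hcoeff]
    gcongr
    exact hν.2
  · rw [hcoeff, sub_right_inj, mul_left_inj' hlam.ne']

/-- For `λ > 0` and `μ ∈ (0, 2/(2λ + L_f)]`, the mapping
`x ↦ Prox_{μg}((1-μλ)x - μ∇f(x) + μλx̄₀ + μη)` is Lipschitz with constant `1 - μλ < 1`,
hence a contraction; moreover over `μ ∈ (0, 2/(2λ + L_f)]` the coefficient `1 - μλ`
attains its minimum `L_f/(2λ + L_f)` exactly at `μ = 2/(2λ + L_f)`. -/
theorem stmt1 {n : ℕ}
    (f : Euc n → ℝ) (f' : Euc n → Euc n) (Lf : ℝ) (hLf : 0 < Lf)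
    (hfconv : ConvexOn ℝ Set.univ f)
    (hfgrad : ∀ z, HasGradientAt f (f' z) z)
    (hflip : ∀ z w, ‖f' z - f' w‖ ≤ Lf * ‖z - w‖)
    (g : Euc n → EReal) (hgproper : ProperE g) (hgconv : ConvexEReal g)
    (hglsc : LowerSemicontinuous g)
    (P : ℝ → Euc n → Euc n) (hP : IsProx g P)
    (lam mu : ℝ) (hlam : 0 < lam) (hmu : mu ∈ Set.Ioc 0 (2/(2*lam + Lf)))
    (x0 η : Euc n) :
    (∀ z w : Euc n,
        ‖P mu ((1 - mu*lam) • z - mu • f' z + (mu*lam) • x0 + mu • η) -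
          P mu ((1 - mu*lam) • w - mu • f' w + (mu*lam) • x0 + mu • η)‖ ≤
          (1 - mu*lam) * ‖z - w‖) ∧
      (1 - mu*lam < 1) ∧
      (∀ ν : ℝ, ν ∈ Set.Ioc 0 (2/(2*lam + Lf)) → Lf/(2*lam + Lf) ≤ 1 - ν*lam) ∧
      (∀ ν : ℝ, ν ∈ Set.Ioc 0 (2/(2*lam + Lf)) →
        (1 - ν*lam = Lf/(2*lam + Lf) ↔ ν = 2/(2*lam + Lf))) :=
  stmt1_general f f' Lf hLf hfconv hfgrad hflip g hgproper hgconv P hP lam mu hlam hmu x0 η
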